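/- Terminal state of the grabbing particle system is uniform: for every 1 ≤ k ≤ n and nonnegative integers x_1, ..., x_n with x_1 + ... + x_n = n − k, the terminal state of the grabbing particle system started with n particles, particle i bearing x_i arms, is uniformly distributed on Φ(x_1,...,x_n), the set of planar forests of k rooted trees on n labeled vertices with n − k labeled edges in which vertex i has out-degree x_i for each i. -/

import Mathlib

open scoped ENNReal
open Classical

/-! ### The grabbing particle system

`n` particles are labeled by `Fin n`; particle `i` carries `x i` arms.  The arms are enumerated
uniformly at random and activated in that order; an activated arm grabs a particle chosen
uniformly at random among the particles that have not been grabbed yet and do not belong to the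
cluster of the arm's owner; the grabbed particle becomes the right-end of the new directed
edge.  Particles initially lie on the horizontal axis in a uniformly random order. -/

/-- The arms: arm `a` of particle `i`. -/
def ArmIdx (n : ℕ) (x : Fin n → ℕ) : Type := Σ i : Fin n, Fin (x i)

instance (n : ℕ) (x : Fin n → ℕ) : Fintype (ArmIdx n x) := by unfold ArmIdx; infer_instance
instance (n : ℕ) (x : Fin n → ℕ) : DecidableEq (ArmIdx n x) := by unfold ArmIdx; infer_instance

/-- Total number of arms. -/
def NArms (n : ℕ) (x : Fin n → ℕ) : ℕ := ∑ i, x i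

instance (n : ℕ) (x : Fin n → ℕ) : Nonempty (Fin (NArms n x) ≃ ArmIdx n x) :=
  ⟨Fintype.equivOfCardEq (by rw [Fintype.card_fin, NArms]; simp [ArmIdx])⟩

/-- One step towards the root of the cluster of `v`, given the arm enumeration `e` and the
sequence `g` of particles grabbed by the first `t` arms: the owner of the arm that grabbed `v`,
or `v` itself if `v` has not been grabbed. -/
noncomputable def parentStep {n : ℕ} {x : Fin n → ℕ} (e : Fin (NArms n x) ≃ ArmIdx n x)
    {t : ℕ} (ht : t ≤ NArms n x) (g : Fin t → Fin n) (v : Fin n) : Fin n :=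
  if h : ∃ s : Fin t, g s = v then (e (Fin.castLE ht h.choose)).1 else v

/-- The root of the cluster currently containing `v` (obtained by iterating `parentStep`
`n` times, which suffices since clusters have at most `n` particles). -/
noncomputable def clusterRoot {n : ℕ} {x : Fin n → ℕ} (e : Fin (NArms n x) ≃ ArmIdx n x)
    {t : ℕ} (ht : t ≤ NArms n x) (g : Fin t → Fin n) (v : Fin n) : Fin n :=
  (parentStep e ht g)^[n] v

/-- Running the grabbing dynamics from time `t` onwards, given the arm enumeration `e` and the
grabs made so far: at each step the active arm grabs a uniformly chosen particle among those
not yet grabbed and not in the cluster of the arm's owner.  (If no particle is available —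
which never happens along the actual dynamics — a dummy transition is made.)  The result is
the law of the full sequence of grabbed particles. -/
noncomputable def runGrab {n : ℕ} (x : Fin n → ℕ) (e : Fin (NArms n x) ≃ ArmIdx n x) :
    (t : ℕ) → (ht : t ≤ NArms n x) → (Fin t → Fin n) → PMF (Fin (NArms n x) → Fin n) :=
  fun t ht g =>
    if h : t < NArms n x then
      let owner : Fin n := (e ⟨t, h⟩).1
      let S : Finset (Fin n) := Finset.univ.filter fun v =>
        (∀ s : Fin t, g s ≠ v) ∧ clusterRoot e ht g owner ≠ v
      if hS : S.Nonempty then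
        (PMF.uniformOfFinset S hS).bind fun v => runGrab x e (t + 1) h (Fin.snoc g v)
      else runGrab x e (t + 1) h (Fin.snoc g owner)
    else
      PMF.pure fun s => g (Fin.cast (by omega) s)
termination_by t _ _ => NArms n x - t

/-- The state space recording the randomness of the grabbing particle system with arm counts
`x` : the (uniform) enumeration of the arms, the sequence of grabbed particles (the `t`-th
activated arm, which is also the edge labeled `t`, points from its owner to the particle
`g t`), and the (uniform) initial ordering of the particles on the axis. -/
def SysSt (n : ℕ) (x : Fin n → ℕ) : Type :=
  (Fin (NArms n x) ≃ ArmIdx n x) × (Fin (NArms n x) → Fin n) × Equiv.Perm (Fin n)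

/-- The law of the terminal state of the grabbing particle system with arm counts `x`. -/
noncomputable def sysLaw (n : ℕ) (x : Fin n → ℕ) : PMF (SysSt n x) :=
  (PMF.uniformOfFintype (Fin (NArms n x) ≃ ArmIdx n x)).bind fun e =>
    (PMF.uniformOfFintype (Equiv.Perm (Fin n))).bind fun π =>
      (runGrab x e 0 (Nat.zero_le _) (fun s => s.elim0)).map fun g => (e, g, π)

/-- An element of `Φ(x₁, …, xₙ)`: a planar forest of `k` rooted trees (ordered from left to
right) on `n` labeled vertices with `n - k` labeled edges, in which vertex `i` has out-degree
`x i`.  The edge labeled `t` goes from the owner of the arm `armEnum t` (using the arm slot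
`(armEnum t).2`, which gives the planar order of the children) to the vertex `grab t`; each
vertex is grabbed at most once and the structure is acyclic, so it is a forest; `rootOrder`
is the left-to-right order of the roots (the vertices that are not grabbed). -/
structure GPConfig (n k : ℕ) (x : Fin n → ℕ) : Type where
  armEnum : Fin (NArms n x) ≃ ArmIdx n x
  grab : Fin (NArms n x) → Fin n
  grab_inj : Function.Injective grab
  acyclic : ∃ d : Fin n → ℕ, ∀ t, d (grab t) = d (armEnum t).1 + 1
  rootOrder : Fin k ≃ {v : Fin n // ∀ t, grab t ≠ v}

/-- The event that the terminal state of the grabbing particle system realizes the planar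
forest `c` : the arm enumeration and the grabs match, and the initial ordering `π` of the
particles puts the roots in the left-to-right order prescribed by `c.rootOrder` (the `j`-th
root has exactly `j` roots to its left). -/
def realizes {n k : ℕ} {x : Fin n → ℕ} (c : GPConfig n k x) (s : SysSt n x) : Prop :=
  s.1 = c.armEnum ∧ s.2.1 = c.grab ∧
    ∀ j : Fin k,
      (Finset.univ.filter fun v : Fin n =>
        (∀ t, c.grab t ≠ v) ∧ s.2.2 v < s.2.2 (c.rootOrder j).1).card = (j : ℕ)

/-!
Given the arm enumeration, the grabs made so far always form a forest whose trees are the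
clusters. So the arm activated at time `t` has exactly `n - t - 1` admissible targets (the
`n - t` roots other than the root of its own cluster), and a target is admissible exactly when
grabbing it keeps a forest. Hence every forest with out-degrees `x` arises with the same
probability `∏_{t < n - k} 1 / (n - t - 1)`, and as these probabilities add up to one there are
`∏_{t < n - k} (n - t - 1)` such forests for each enumeration. Independently, the uniform initial
ordering of the particles puts the `k` roots in a prescribed left-to-right order with probability
`1 / k!`. So every element of `Φ(x)` has probability
`1 / (#enumerations · ∏ (n - t - 1) · k!) = 1 / |Φ(x)|`.
-/

open Finset Function
open scoped Nat

theorem Function.isFixedPt_iterate_of_card_le {α : Type*} [Fintype α] {f : α → α} (d : α → ℕ)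
    (hd : ∀ a, f a ≠ a → d (f a) < d a) (a : α) {N : ℕ} (hN : Fintype.card α ≤ N) :
    IsFixedPt f (f^[N] a) := by
  by_contra hfix
  have moving : ∀ i ≤ N, f (f^[i] a) ≠ f^[i] a := fun i hi hi' => hfix <| by
    rw [← Nat.sub_add_cancel hi, iterate_add_apply, iterate_fixed hi']
    exact hi'
  have descent : StrictAntiOn (fun i => d (f^[i] a)) (Set.Iic N) :=
    strictAntiOn_Iic_of_succ_lt fun i hi => by
      have := hd _ (moving i hi.le)
      rwa [← iterate_succ_apply' f] at this
  have hinj : Injective fun i : Fin (N + 1) => f^[i] a := fun i j hij =>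
    Fin.ext (descent.injOn (Fin.is_le i) (Fin.is_le j) (congrArg d hij))
  simpa using (Fintype.card_le_of_injective _ hinj).trans hN

theorem Fin.snoc_comp_castLE {α : Type*} {m t : ℕ} (f : Fin m → α) (h : t < m) :
    Fin.snoc (fun s : Fin t => f (Fin.castLE h.le s)) (f ⟨t, h⟩) =
      fun s : Fin (t + 1) => f (Fin.castLE h s) := by
  funext s
  induction s using Fin.lastCases with
  | last => rw [Fin.snoc_last]; rfl
  | cast s => rw [Fin.snoc_castSucc]; rfl

section GrabForest

variable {n : ℕ} {x : Fin n → ℕ} {e : Fin (NArms n x) ≃ ArmIdx n x} {t : ℕ}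
  {ht : t ≤ NArms n x} {g : Fin t → Fin n}

def IsGrabForest (e : Fin (NArms n x) ≃ ArmIdx n x) (ht : t ≤ NArms n x) (g : Fin t → Fin n) :
    Prop :=
  Injective g ∧ ∃ d : Fin n → ℕ, ∀ s, d (g s) = d (e (Fin.castLE ht s)).1 + 1

theorem IsGrabForest.castLE {t' : ℕ} (htt' : t ≤ t') {ht' : t' ≤ NArms n x}
    {f : Fin t' → Fin n} (hf : IsGrabForest e ht' f) :
    IsGrabForest e (htt'.trans ht') fun s => f (Fin.castLE htt' s) :=
  ⟨hf.1.comp (Fin.castLE_injective htt'), hf.2.imp fun _ hd _ => hd _⟩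

theorem parentStep_of_forall_ne {v : Fin n} (hv : ∀ s, g s ≠ v) : parentStep e ht g v = v := by
  rw [parentStep, dif_neg (by simpa using hv)]

theorem parentStep_apply (hinj : Injective g) (s : Fin t) :
    parentStep e ht g (g s) = (e (Fin.castLE ht s)).1 := by
  have h : ∃ s', g s' = g s := ⟨s, rfl⟩
  rw [parentStep, dif_pos h, hinj h.choose_spec]

theorem depth_parentStep_lt (hinj : Injective g) {d : Fin n → ℕ}
    (hd : ∀ s, d (g s) = d (e (Fin.castLE ht s)).1 + 1) {v : Fin n}
    (hv : parentStep e ht g v ≠ v) : d (parentStep e ht g v) < d v := by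
  obtain ⟨s, rfl⟩ : ∃ s, g s = v := by
    by_contra! h
    exact hv (parentStep_of_forall_ne h)
  rw [parentStep_apply hinj, hd s]
  exact Nat.lt_succ_self _

theorem depth_clusterRoot_le (hinj : Injective g) {d : Fin n → ℕ}
    (hd : ∀ s, d (g s) = d (e (Fin.castLE ht s)).1 + 1) (v : Fin n) :
    d (clusterRoot e ht g v) ≤ d v := by
  have : Antitone fun i => d ((parentStep e ht g)^[i] v) := antitone_nat_of_succ_le fun i => by
    rw [iterate_succ_apply']
    by_cases hfix : parentStep e ht g ((parentStep e ht g)^[i] v) = (parentStep e ht g)^[i] v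
    · rw [hfix]
    · exact (depth_parentStep_lt hinj hd hfix).le
  exact this (Nat.zero_le n)

theorem IsGrabForest.isFixedPt_clusterRoot (hg : IsGrabForest e ht g) (v : Fin n) :
    IsFixedPt (parentStep e ht g) (clusterRoot e ht g v) := by
  obtain ⟨hinj, d, hd⟩ := hg
  exact isFixedPt_iterate_of_card_le d (fun _ => depth_parentStep_lt hinj hd) v
    (Fintype.card_fin n).le

theorem IsGrabForest.clusterRoot_ne (hg : IsGrabForest e ht g) (v : Fin n) (s : Fin t) :
    g s ≠ clusterRoot e ht g v := by
  intro hs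
  have hfix := hg.isFixedPt_clusterRoot v
  rw [IsFixedPt, ← hs, parentStep_apply hg.1] at hfix
  obtain ⟨d, hd⟩ := hg.2
  have := hd s
  rw [← hfix] at this
  omega

theorem clusterRoot_of_forall_ne {v : Fin n} (hv : ∀ s, g s ≠ v) : clusterRoot e ht g v = v :=
  iterate_fixed (parentStep_of_forall_ne hv) n

theorem IsGrabForest.clusterRoot_owner (hg : IsGrabForest e ht g) (s : Fin t) :
    clusterRoot e ht g (e (Fin.castLE ht s)).1 = clusterRoot e ht g (g s) := by
  rw [← parentStep_apply hg.1 s, clusterRoot, ← iterate_succ_apply, iterate_succ_apply']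
  exact hg.isFixedPt_clusterRoot (g s)

theorem card_filter_forall_ne (hinj : Injective g) : #{v | ∀ s, g s ≠ v} = n - t := by
  have : ({v | ∀ s, g s ≠ v} : Finset (Fin n)) = univ \ univ.image g := by
    ext v
    simp
  rw [this, card_sdiff_of_subset (subset_univ _), card_image_of_injective _ hinj]
  simp

theorem IsGrabForest.card_admissible (hg : IsGrabForest e ht g) (w : Fin n) :
    #{v | (∀ s, g s ≠ v) ∧ clusterRoot e ht g w ≠ v} = n - t - 1 := by
  have : ({v | (∀ s, g s ≠ v) ∧ clusterRoot e ht g w ≠ v} : Finset (Fin n)) =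
      ({v | ∀ s, g s ≠ v} : Finset (Fin n)).erase (clusterRoot e ht g w) := by
    ext v
    simp only [mem_filter, mem_erase, mem_univ, true_and]
    tauto
  rw [this, card_erase_of_mem (by simpa using hg.clusterRoot_ne w), card_filter_forall_ne hg.1]

/-- The admissible targets of `runGrab` are exactly the grabs that keep the edges a forest. -/
theorem IsGrabForest.snoc_iff (h : t < NArms n x) (hg : IsGrabForest e h.le g) (v : Fin n) :
    IsGrabForest e h (Fin.snoc g v) ↔
      (∀ s, g s ≠ v) ∧ clusterRoot e h.le g (e ⟨t, h⟩).1 ≠ v := by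
  obtain ⟨hinj, d, hd⟩ := id hg
  constructor
  · rintro ⟨hinj', d', hd'⟩
    have hv : ∀ s, g s ≠ v := by
      simpa using (Fin.snoc_injective_iff.mp hinj').2
    refine ⟨hv, fun hroot => ?_⟩
    have hle := depth_clusterRoot_le hinj (d := d') (fun s => by simpa using hd' s.castSucc)
      (e ⟨t, h⟩).1
    have hlast : d' v = d' (e ⟨t, h⟩).1 + 1 := by
      have := hd' (Fin.last t)
      rwa [Fin.snoc_last] at this
    rw [hroot] at hle
    omega
  · rintro ⟨hv, hroot⟩
    refine ⟨Fin.snoc_injective_of_injective hinj (by simpa using hv), ?_⟩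
    -- hang the tree of `v` one level below the owner of the active arm
    let D := d (e ⟨t, h⟩).1 + 1
    refine ⟨fun w => if clusterRoot e h.le g w = v then d w - d v + D else d w, fun s => ?_⟩
    induction s using Fin.lastCases with
    | last =>
      have hlast : Fin.castLE h (Fin.last t) = ⟨t, h⟩ := rfl
      simp only [Fin.snoc_last, hlast, clusterRoot_of_forall_ne hv, if_neg hroot, if_true]
      omega
    | cast s =>
      have hcast : Fin.castLE h s.castSucc = Fin.castLE h.le s := rfl
      simp only [Fin.snoc_castSucc, hcast, hg.clusterRoot_owner]
      split_ifs with hs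
      · have hle := depth_clusterRoot_le hinj hd (e (Fin.castLE h.le s)).1
        rw [hg.clusterRoot_owner, hs] at hle
        have := hd s
        omega
      · exact hd s

end GrabForest

section GrabLaw

variable {n : ℕ} {x : Fin n → ℕ} {e : Fin (NArms n x) ≃ ArmIdx n x}

theorem runGrab_apply (hm : NArms n x < n) {t : ℕ} (ht : t ≤ NArms n x) {g : Fin t → Fin n}
    (hg : IsGrabForest e ht g) (f : Fin (NArms n x) → Fin n) :
    runGrab x e t ht g f =
      if IsGrabForest e le_rfl f ∧ (fun s => f (Fin.castLE ht s)) = g then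
        ∏ i ∈ Ico t (NArms n x), ((n - i - 1 : ℕ) : ℝ≥0∞)⁻¹
      else 0 := by
  by_cases h : t < NArms n x
  · set S : Finset (Fin n) := {v | (∀ s, g s ≠ v) ∧ clusterRoot e ht g (e ⟨t, h⟩).1 ≠ v}
    have hS : #S = n - t - 1 := hg.card_admissible _
    have hSne : S.Nonempty := card_pos.mp (by omega)
    have hprefix : ∀ v, (fun s => f (Fin.castLE h s)) = Fin.snoc g v ↔
        (fun s => f (Fin.castLE ht s)) = g ∧ f ⟨t, h⟩ = v := fun v => by
      rw [← Fin.snoc_comp_castLE f h, Fin.snoc_inj]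
    have hnext : ∀ v ∈ S, runGrab x e (t + 1) h (Fin.snoc g v) f =
        if IsGrabForest e le_rfl f ∧ (fun s => f (Fin.castLE h s)) = Fin.snoc g v then
          ∏ i ∈ Ico (t + 1) (NArms n x), ((n - i - 1 : ℕ) : ℝ≥0∞)⁻¹
        else 0 := fun v hv =>
      runGrab_apply hm h ((hg.snoc_iff h v).2 (by simpa [S] using hv)) f
    have hvanish : ∀ v, ¬(IsGrabForest e le_rfl f ∧ (fun s => f (Fin.castLE ht s)) = g ∧
        f ⟨t, h⟩ = v) →
        PMF.uniformOfFinset S hSne v * runGrab x e (t + 1) h (Fin.snoc g v) f = 0 := by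
      intro v hv
      by_cases hvS : v ∈ S
      · rw [hnext v hvS, if_neg (by rwa [hprefix]), mul_zero]
      · rw [PMF.uniformOfFinset_apply_of_notMem hSne hvS, zero_mul]
    rw [runGrab, dif_pos h]
    dsimp only
    rw [dif_pos hSne, PMF.bind_apply, tsum_eq_single (f ⟨t, h⟩) fun v hv =>
      hvanish v fun hfv => hv hfv.2.2.symm]
    by_cases hf : IsGrabForest e le_rfl f ∧ (fun s => f (Fin.castLE ht s)) = g
    · have hmem : f ⟨t, h⟩ ∈ S := by
        have hsnoc : IsGrabForest e h (Fin.snoc g (f ⟨t, h⟩)) := by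
          rw [← hf.2, Fin.snoc_comp_castLE]
          exact hf.1.castLE h
        simpa [S] using (hg.snoc_iff h _).1 hsnoc
      rw [hnext _ hmem, if_pos ⟨hf.1, (hprefix _).2 ⟨hf.2, rfl⟩⟩, if_pos hf,
        PMF.uniformOfFinset_apply_of_mem hSne hmem, hS, prod_eq_prod_Ico_succ_bot h]
    · rw [if_neg hf, hvanish _ fun hf' => hf ⟨hf'.1, hf'.2.1⟩]
  · rw [runGrab, dif_neg h, PMF.pure_apply, Ico_eq_empty h, prod_empty]
    congr 1
    refine propext ⟨?_, fun ⟨_, hfg⟩ => hfg ▸ rfl⟩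
    rintro rfl
    exact ⟨⟨hg.1.comp (Fin.cast_injective _), hg.2.imp fun _ hd _ => hd _⟩, rfl⟩
termination_by NArms n x - t

end GrabLaw

section Counting

variable {n : ℕ} {x : Fin n → ℕ}

theorem prod_sub_sub_one_ne_zero {m : ℕ} (hm : m < n) : ∏ i ∈ range m, (n - i - 1) ≠ 0 :=
  prod_ne_zero_iff.2 fun i hi => by
    have := mem_range.mp hi
    omega

theorem isGrabForest_elim0 (e : Fin (NArms n x) ≃ ArmIdx n x) :
    IsGrabForest e (Nat.zero_le _) (Fin.elim0 : Fin 0 → Fin n) :=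
  ⟨injective_of_subsingleton _, fun _ => 0, Fin.elim0⟩

theorem runGrab_elim0_apply (hm : NArms n x < n) (e : Fin (NArms n x) ≃ ArmIdx n x)
    (f : Fin (NArms n x) → Fin n) :
    runGrab x e 0 (Nat.zero_le _) Fin.elim0 f =
      if IsGrabForest e le_rfl f then ((∏ i ∈ range (NArms n x), (n - i - 1) : ℕ) : ℝ≥0∞)⁻¹
      else 0 := by
  rw [runGrab_apply hm _ (isGrabForest_elim0 e), ← range_eq_Ico, Nat.cast_prod,
    ENNReal.prod_inv_distrib fun _ _ _ _ _ => Or.inr (ENNReal.natCast_ne_top _)]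
  simp only [Subsingleton.elim _ (Fin.elim0 : Fin 0 → Fin n), and_true]

/-- Every forest has the same probability under `runGrab`, and these probabilities add up to
one. -/
theorem card_isGrabForest (hm : NArms n x < n) (e : Fin (NArms n x) ≃ ArmIdx n x) :
    #{f : Fin (NArms n x) → Fin n | IsGrabForest e le_rfl f} =
      ∏ i ∈ range (NArms n x), (n - i - 1) := by
  have htotal := (runGrab x e 0 (Nat.zero_le _) Fin.elim0).tsum_coe
  rw [tsum_fintype, sum_congr rfl fun f _ => runGrab_elim0_apply hm e f, ← sum_filter, sum_const,
    nsmul_eq_mul, ← div_eq_mul_inv, ENNReal.div_eq_one_iff _ (ENNReal.natCast_ne_top _)] at htotal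
  · exact_mod_cast htotal
  · exact Nat.cast_ne_zero.2 (prod_sub_sub_one_ne_zero hm)

theorem card_GPConfig {k : ℕ} (hk : 1 ≤ k) (hkn : k ≤ n) (hsum : ∑ i, x i = n - k) :
    Nat.card (GPConfig n k x) = Fintype.card (Fin (NArms n x) ≃ ArmIdx n x) *
      ((∏ i ∈ range (NArms n x), (n - i - 1)) * k !) := by
  let toSigma : GPConfig n k x ≃ Σ e : Fin (NArms n x) ≃ ArmIdx n x,
      Σ g : {g // IsGrabForest e le_rfl g}, Fin k ≃ {v // ∀ t, g.1 t ≠ v} :=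
    { toFun c := ⟨c.armEnum, ⟨c.grab, c.grab_inj, c.acyclic⟩, c.rootOrder⟩
      invFun q := ⟨q.1, q.2.1.1, q.2.1.2.1, q.2.1.2.2, q.2.2⟩ }
  have hroots (e : Fin (NArms n x) ≃ ArmIdx n x) (g : {g // IsGrabForest e le_rfl g}) :
      Fintype.card (Fin k ≃ {v // ∀ t, g.1 t ≠ v}) = k ! := by
    have hcard : Fintype.card (Fin k) = Fintype.card {v // ∀ t, g.1 t ≠ v} := by
      rw [Fintype.card_fin, Fintype.card_subtype, card_filter_forall_ne g.2.1, NArms, hsum]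
      omega
    rw [Fintype.card_equiv (Fintype.equivOfCardEq hcard), Fintype.card_fin]
  have hm : NArms n x < n := by rw [NArms, hsum]; omega
  rw [Nat.card_congr toSigma, Nat.card_eq_fintype_card]
  simp only [Fintype.card_sigma, hroots, sum_const, card_univ, Fintype.card_subtype,
    card_isGrabForest hm, smul_eq_mul]

end Counting

section RootRank

variable {N K : ℕ} {p : Fin N → Prop} [DecidablePred p] (r : Fin K ≃ {v // p v})

/-- The number of roots to the left of the `j`-th root `r j` when particle `v` sits at position
`π v` of the axis. -/
def rootRank (π : Equiv.Perm (Fin N)) (j : Fin K) : ℕ := #{v | p v ∧ π v < π (r j)}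

theorem rootRank_lt (π : Equiv.Perm (Fin N)) (j : Fin K) : rootRank r π j < K := by
  have hroots : #{v | p v} = K := by
    rw [← Fintype.card_subtype, Fintype.card_congr r.symm, Fintype.card_fin]
  have hsub : ({v | p v ∧ π v < π (r j)} : Finset (Fin N)) ⊆ ({v | p v} : Finset _).erase (r j) :=
    fun v hv => by
      simp only [mem_filter, mem_univ, true_and, mem_erase] at hv ⊢
      exact ⟨fun hvj => (hvj ▸ hv.2).false, hv.1⟩
  have := card_le_card hsub
  rw [card_erase_of_mem (by simpa using (r j).2), hroots] at this
  have := j.pos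
  unfold rootRank
  omega

theorem rootRank_lt_rootRank (π : Equiv.Perm (Fin N)) {i j : Fin K} (hij : π (r i) < π (r j)) :
    rootRank r π i < rootRank r π j :=
  card_lt_card <| (ssubset_iff_of_subset fun v hv => by
    simp only [mem_filter, mem_univ, true_and] at hv ⊢
    exact ⟨hv.1, hv.2.trans hij⟩).2 ⟨r i, by simpa using ⟨(r i).2, hij⟩, by simp⟩

theorem rootRank_injective (π : Equiv.Perm (Fin N)) : Injective (rootRank r π) := by
  intro i j hij
  rcases lt_trichotomy (π (r i)) (π (r j)) with hlt | heq | hgt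
  · exact absurd hij (rootRank_lt_rootRank r π hlt).ne
  · exact r.injective (Subtype.ext (π.injective heq))
  · exact absurd hij (rootRank_lt_rootRank r π hgt).ne'

theorem rootRank_mul_extendDomain (π : Equiv.Perm (Fin N)) (τ : Equiv.Perm (Fin K)) (j : Fin K) :
    rootRank r (π * τ.extendDomain r) j = rootRank r π (τ j) := by
  set σ := τ.extendDomain r
  have hp : ∀ v, p (σ v) ↔ p v := fun v => by
    by_cases hv : p v
    · simpa [σ, Equiv.Perm.extendDomain_apply_subtype τ r hv, hv] using (r _).2
    · rw [Equiv.Perm.extendDomain_apply_not_subtype τ r hv]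
  refine card_nbij' σ σ.symm (fun v hv => ?_) (fun w hw => ?_) (fun v _ => by simp)
    (fun w _ => by simp)
  · simp only [coe_filter, Set.mem_ofPred_eq, mem_univ, true_and, Equiv.Perm.mul_apply,
      σ, Equiv.Perm.extendDomain_apply_image] at hv ⊢
    exact ⟨(hp v).2 hv.1, hv.2⟩
  · simp only [coe_filter, Set.mem_ofPred_eq, mem_univ, true_and, Equiv.Perm.mul_apply,
      σ, Equiv.Perm.extendDomain_apply_image] at hw ⊢
    rw [Equiv.apply_symm_apply, ← hp, Equiv.apply_symm_apply]
    exact hw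

noncomputable def rankPerm (π : Equiv.Perm (Fin N)) : Equiv.Perm (Fin K) :=
  Equiv.ofBijective (fun j => ⟨rootRank r π j, rootRank_lt r π j⟩) <|
    Finite.injective_iff_bijective.mp fun _ _ hij => rootRank_injective r π (congrArg Fin.val hij)

theorem rankPerm_mul_extendDomain (π : Equiv.Perm (Fin N)) (τ : Equiv.Perm (Fin K)) :
    rankPerm r (π * τ.extendDomain r) = rankPerm r π * τ :=
  Equiv.ext fun j => Fin.ext (rootRank_mul_extendDomain r π τ j)

theorem rankPerm_eq_one_iff (π : Equiv.Perm (Fin N)) :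
    rankPerm r π = 1 ↔ ∀ j, rootRank r π j = j := by
  simp [Equiv.ext_iff, Fin.ext_iff, rankPerm]

/-- Right multiplication by permutations of the roots acts freely on the orderings of the
particles, and each orbit contains exactly one ordering with `rankPerm r π = 1`. -/
noncomputable def permEquivRankPermEqOneProd :
    Equiv.Perm (Fin N) ≃ {π // rankPerm r π = 1} × Equiv.Perm (Fin K) where
  toFun ψ := (⟨ψ * (rankPerm r ψ)⁻¹.extendDomain r, by
    rw [rankPerm_mul_extendDomain, mul_inv_cancel]⟩, rankPerm r ψ)
  invFun q := q.1.1 * q.2.extendDomain r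
  left_inv ψ := by
    simp only [← Equiv.Perm.extendDomain_inv, inv_mul_cancel_right]
  right_inv q := by
    obtain ⟨⟨π, hπ⟩, τ⟩ := q
    have hτ : rankPerm r (π * τ.extendDomain r) = τ := by
      rw [rankPerm_mul_extendDomain, hπ, one_mul]
    ext1
    · ext1
      simp only [hτ, ← Equiv.Perm.extendDomain_inv, mul_inv_cancel_right]
    · exact hτ

theorem card_rankPerm_eq_one_mul_factorial :
    Fintype.card {π // rankPerm r π = 1} * K ! = N ! := by
  have := Fintype.card_congr (permEquivRankPermEqOneProd r)
  rw [Fintype.card_prod, Fintype.card_perm, Fintype.card_perm, Fintype.card_fin,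
    Fintype.card_fin] at this
  exact this.symm

theorem card_rankPerm_eq_one_mul_inv_factorial :
    (Fintype.card {π // rankPerm r π = 1} : ℝ≥0∞) * (N ! : ℝ≥0∞)⁻¹ = (K ! : ℝ≥0∞)⁻¹ := by
  have hcard := card_rankPerm_eq_one_mul_factorial r
  have hpos : Fintype.card {π // rankPerm r π = 1} ≠ 0 := fun h0 =>
    N.factorial_ne_zero (by rw [← hcard, h0, zero_mul])
  rw [← hcard, Nat.cast_mul, ENNReal.mul_inv (Or.inr (ENNReal.natCast_ne_top _))
    (Or.inl (ENNReal.natCast_ne_top _)), ← mul_assoc,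
    ENNReal.mul_inv_cancel (by exact_mod_cast hpos) (ENNReal.natCast_ne_top _), one_mul]

end RootRank

theorem PMF.map_apply_of_notMem_range {α β : Type*} {f : α → β} (p : PMF α) {b : β}
    (hb : b ∉ Set.range f) : p.map f b = 0 := by
  rw [PMF.map_apply, ENNReal.tsum_eq_zero]
  exact fun a => if_neg fun h => hb ⟨a, h.symm⟩

theorem PMF.map_apply_of_injective {α β : Type*} {f : α → β} (hf : Injective f) (p : PMF α)
    (a : α) : p.map f (f a) = p a := by
  rw [PMF.map_apply, tsum_eq_single a fun a' ha' => if_neg (hf.ne ha'.symm), if_pos rfl]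

theorem PMF.bind_bind_map_apply {α β γ : Type*} (μ : PMF α) (ν : PMF γ) (κ : α → PMF β)
    (a : α) (b : β) (c : γ) :
    (μ.bind fun a => ν.bind fun c => (κ a).map fun b => (a, b, c)) (a, b, c) =
      μ a * (ν c * κ a b) := by
  have hoff : ∀ a' c', (a', c') ≠ (a, c) →
      ((κ a').map fun b' => (a', b', c')) (a, b, c) = 0 := fun a' c' hne =>
    PMF.map_apply_of_notMem_range _ fun ⟨_, h⟩ => hne (by simp_all)
  rw [PMF.bind_apply, tsum_eq_single a fun a' ha' => ?_, PMF.bind_apply,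
    tsum_eq_single c fun c' hc' => by rw [hoff _ _ (by simp [hc']), mul_zero],
    PMF.map_apply_of_injective fun b₁ b₂ h => by simpa using h]
  rw [PMF.bind_apply, ENNReal.tsum_eq_zero.2 fun c' => by rw [hoff _ _ (by simp [ha']), mul_zero],
    mul_zero]

theorem sysLaw_apply {n : ℕ} {x : Fin n → ℕ} (e : Fin (NArms n x) ≃ ArmIdx n x)
    (g : Fin (NArms n x) → Fin n) (π : Equiv.Perm (Fin n)) :
    sysLaw n x (e, g, π) = (Fintype.card (Fin (NArms n x) ≃ ArmIdx n x) : ℝ≥0∞)⁻¹ *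
      ((n ! : ℝ≥0∞)⁻¹ * runGrab x e 0 (Nat.zero_le _) Fin.elim0 g) := by
  refine (PMF.bind_bind_map_apply _ _ _ e g π).trans ?_
  rw [PMF.uniformOfFintype_apply, PMF.uniformOfFintype_apply, Fintype.card_perm,
    Fintype.card_fin]

def realizesEquiv {n k : ℕ} {x : Fin n → ℕ} (c : GPConfig n k x) :
    {s // realizes c s} ≃ {π // rankPerm c.rootOrder π = 1} where
  toFun s := ⟨s.1.2.2, (rankPerm_eq_one_iff _ _).2 s.2.2.2⟩
  invFun π := ⟨(c.armEnum, c.grab, π.1), rfl, rfl, (rankPerm_eq_one_iff _ _).1 π.2⟩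
  left_inv s := Subtype.ext (Prod.ext s.2.1.symm (Prod.ext s.2.2.1.symm rfl))

theorem tsum_sysLaw_realizes {n k : ℕ} {x : Fin n → ℕ} (hm : NArms n x < n)
    (c : GPConfig n k x) :
    ∑' s : {s // realizes c s}, sysLaw n x s.1 =
      (Fintype.card (Fin (NArms n x) ≃ ArmIdx n x) : ℝ≥0∞)⁻¹ *
        (((∏ i ∈ range (NArms n x), (n - i - 1) : ℕ) : ℝ≥0∞)⁻¹ * (k ! : ℝ≥0∞)⁻¹) := by
  have hgrab : runGrab x c.armEnum 0 (Nat.zero_le _) Fin.elim0 c.grab =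
      ((∏ i ∈ range (NArms n x), (n - i - 1) : ℕ) : ℝ≥0∞)⁻¹ := by
    rw [runGrab_elim0_apply hm, if_pos ⟨c.grab_inj, c.acyclic⟩]
  rw [← (realizesEquiv c).symm.tsum_eq]
  simp only [realizesEquiv, Equiv.coe_fn_symm_mk, sysLaw_apply, hgrab, tsum_fintype, sum_const,
    card_univ, nsmul_eq_mul]
  rw [mul_left_comm, ← mul_assoc (Fintype.card _ : ℝ≥0∞), card_rankPerm_eq_one_mul_inv_factorial,
    mul_comm (k ! : ℝ≥0∞)⁻¹]

/-- For every `1 ≤ k ≤ n` and arm counts `x` with `∑ x = n - k`, the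
terminal state of the grabbing particle system started with `n` particles, particle `i`
bearing `x i` arms, is uniformly distributed on the set `Φ(x)` of planar forests of `k`
rooted trees on `n` labeled vertices with `n - k` labeled edges and out-degrees `x`. -/
theorem terminal_state_uniform
    (n k : ℕ) (hk : 1 ≤ k) (hkn : k ≤ n)
    (x : Fin n → ℕ) (hsum : ∑ i, x i = n - k) :
    ∀ c : GPConfig n k x,
      (∑' s : {s : SysSt n x // realizes c s}, sysLaw n x s.1)
        = ((Nat.card (GPConfig n k x) : ℝ≥0∞))⁻¹ := by
  intro c
  have hm : NArms n x < n := by rw [NArms, hsum]; omega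
  have hfin : ∀ a : ℕ, (a : ℝ≥0∞) ≠ ⊤ := ENNReal.natCast_ne_top
  rw [tsum_sysLaw_realizes hm c, card_GPConfig hk hkn hsum, Nat.cast_mul, Nat.cast_mul,
    ENNReal.mul_inv (Or.inr (ENNReal.mul_ne_top (hfin _) (hfin _))) (Or.inl (hfin _)),
    ENNReal.mul_inv (Or.inr (hfin _)) (Or.inl (hfin _))]
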